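/- Let G be a second countable LCA group with dual Ĝ, H ⊆ G a uniform lattice with annihilator H* ⊆ Ĝ discrete and countable, Ω ⊆ Ĝ a measurable section of Ĝ/H* of finite measure. Let A ⊆ L²(G) be at most countable with φ̂ supported in Ω (i.e. φ̂ = 0 a.e. outside Ω) for every φ ∈ A, and let V be the closed span of {T_h φ : h ∈ H, φ ∈ A}. Then V is translation invariant: T_x V ⊆ V for every x ∈ G; in particular V = {f ∈ L²(G) : f̂ = 0 a.e. on E} where E = ⋂_{φ∈A} {φ̂ = 0} ⊆ Ω up to null sets. -/

import Mathlib

/-!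
Let `W` be the space of `f` whose transform `𝓕 f` vanishes a.e. on `E = ⋂_{φ ∈ A} {𝓕 φ = 0}`.
It is closed, and invariant under every `T x` because `𝓕` turns `T x` into multiplication by
`e (-x)`; it contains `A`, so `V ≤ W`. Conversely let `z ∈ W` be orthogonal to `V`. For `φ ∈ A`
the integrable function `F = conj (𝓕 φ) * 𝓕 z` vanishes off `Ω`, and by Plancherel
`∫ F e_h = ⟪T h φ, z⟫ = 0` for `h ∈ H`. Approximating `e_x` on `Ω` by uniformly bounded
trigonometric polynomials in the `e_h`, dominated convergence gives `∫ F e_x = 0` for all `x`,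
hence `F = 0`. Since `A` is countable, `𝓕 z` vanishes a.e. both on and off `E`, so `z = 0` and
`V = W`.
-/

open MeasureTheory Filter Topology
open scoped ENNReal ComplexConjugate InnerProductSpace

lemma conj_eq_apply_neg_of_norm_eq_one {G : Type*} [AddGroup G] {χ : G → ℂ}
    (hnorm : ∀ x, ‖χ x‖ = 1)
    (hadd : ∀ x y, χ (x + y) = χ x * χ y) (x : G) : conj (χ x) = χ (-x) := by
  have hne (y : G) : χ y ≠ 0 := norm_ne_zero_iff.1 (by simp [hnorm])
  have hzero : χ 0 = 1 := by simpa [hne 0] using (hadd 0 0).symm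
  refine mul_left_cancel₀ (hne x) ?_
  rw [← hadd, add_neg_cancel, hzero, Complex.mul_conj, Complex.normSq_eq_norm_sq, hnorm]
  norm_num

lemma integral_mul_eq_zero_of_tendsto {α : Type*} [MeasurableSpace α] {ν : Measure α}
    {F g : α → ℂ} {p : ℕ → α → ℂ} {C : ℝ} (hF : Integrable F ν)
    (hp_meas : ∀ n, AEStronglyMeasurable (p n) ν) (hp_bdd : ∀ n γ, ‖p n γ‖ ≤ C)
    (hp : ∀ n, ∫ γ, F γ * p n γ ∂ν = 0)
    (hlim : ∀ᵐ γ ∂ν, F γ ≠ 0 → Tendsto (fun n => p n γ) atTop (𝓝 (g γ))) :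
    ∫ γ, F γ * g γ ∂ν = 0 := by
  have hprod_lim : ∀ᵐ γ ∂ν, Tendsto (fun n => F γ * p n γ) atTop (𝓝 (F γ * g γ)) := by
    filter_upwards [hlim] with γ hγ
    by_cases hF0 : F γ = 0
    · simp only [hF0, zero_mul, tendsto_const_nhds]
    · exact (hγ hF0).const_mul (F γ)
  have hdom : Tendsto (fun n => ∫ γ, F γ * p n γ ∂ν) atTop (𝓝 (∫ γ, F γ * g γ ∂ν)) :=
    tendsto_integral_of_dominated_convergence (fun γ => ‖F γ‖ * C)
      (fun n => hF.1.mul (hp_meas n)) (hF.norm.mul_const C)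
      (fun n => Eventually.of_forall fun γ => by
        rw [norm_mul]; exact mul_le_mul_of_nonneg_left (hp_bdd n γ) (norm_nonneg _))
      hprod_lim
  simp only [hp] at hdom
  exact tendsto_nhds_unique hdom tendsto_const_nhds

section TrigonometricPolynomials

variable {G Γ : Type*} [MeasurableSpace Γ]

def IsTrigPoly (e : G → Γ → ℂ) (H : Set G) (p : Γ → ℂ) : Prop :=
  ∃ (s : Finset G) (c : G → ℂ), (∀ h ∈ s, h ∈ H) ∧ ∀ γ, p γ = ∑ h ∈ s, c h * e h γ

def IsBoundedTrigLimitOn (e : G → Γ → ℂ) (H : Set G) (ν : Measure Γ) (Ω : Set Γ)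
    (χ : Γ → ℂ) : Prop :=
  ∃ (p : ℕ → Γ → ℂ) (C : ℝ), (∀ n, IsTrigPoly e H (p n)) ∧ (∀ n γ, ‖p n γ‖ ≤ C) ∧
    ∀ᵐ γ ∂ν, γ ∈ Ω → Tendsto (fun n => p n γ) atTop (𝓝 (χ γ))

variable {ν : Measure Γ} {e : G → Γ → ℂ}

lemma IsTrigPoly.measurable {H : Set G} {p : Γ → ℂ} (hp : IsTrigPoly e H p)
    (he_meas : ∀ x, Measurable (e x)) : Measurable p := by
  obtain ⟨s, c, -, hp⟩ := hp
  rw [funext hp]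
  exact Finset.measurable_sum s fun h _ => (he_meas h).const_mul (c h)

lemma IsTrigPoly.integral_mul_eq_zero {H : Set G} {p : Γ → ℂ} (hp : IsTrigPoly e H p)
    (he_meas : ∀ x, Measurable (e x)) (he_bdd : ∀ x γ, ‖e x γ‖ ≤ 1)
    {F : Γ → ℂ} (hF : Integrable F ν) (hFH : ∀ h ∈ H, ∫ γ, F γ * e h γ ∂ν = 0) :
    ∫ γ, F γ * p γ ∂ν = 0 := by
  obtain ⟨s, c, hs, hp⟩ := hp
  have hint : ∀ h ∈ s, Integrable (fun γ => c h * (F γ * e h γ)) ν := fun h _ =>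
    (hF.mul_bdd (he_meas h).aestronglyMeasurable
      (Eventually.of_forall (he_bdd h))).const_mul (c h)
  calc ∫ γ, F γ * p γ ∂ν = ∫ γ, ∑ h ∈ s, c h * (F γ * e h γ) ∂ν := by
        congr 1 with γ
        rw [hp, Finset.mul_sum]
        exact Finset.sum_congr rfl fun _ _ => by ring
    _ = ∑ h ∈ s, c h * ∫ γ, F γ * e h γ ∂ν := by
        rw [integral_finsetSum s hint]
        simp only [integral_const_mul]
    _ = 0 := Finset.sum_eq_zero fun h hh => by rw [hFH h (hs h hh), mul_zero]

lemma ae_eq_zero_of_integral_mul_eq_zero [AddGroup G] {H : Set G} {Ω : Set Γ}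
    (he_meas : ∀ x, Measurable (e x)) (he_bdd : ∀ x γ, ‖e x γ‖ ≤ 1)
    (hdet : ∀ F : Γ → ℂ, Integrable F ν → (∀ x, ∫ γ, F γ * e x γ ∂ν = 0) → F =ᵐ[ν] 0)
    (happrox : ∀ x, IsBoundedTrigLimitOn e H ν Ω (e (-x)))
    {F : Γ → ℂ} (hF : Integrable F ν) (hF_supp : ∀ᵐ γ ∂ν, γ ∉ Ω → F γ = 0)
    (hFH : ∀ h ∈ H, ∫ γ, F γ * e h γ ∂ν = 0) : F =ᵐ[ν] 0 := by
  refine hdet F hF fun x => ?_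
  obtain ⟨p, C, hp_trig, hp_bdd, hp_lim⟩ := happrox (-x)
  simp only [neg_neg] at hp_lim
  refine integral_mul_eq_zero_of_tendsto hF
    (fun n => ((hp_trig n).measurable he_meas).aestronglyMeasurable) hp_bdd
    (fun n => (hp_trig n).integral_mul_eq_zero he_meas he_bdd hF hFH) ?_
  filter_upwards [hp_lim, hF_supp] with γ hγ_lim hγ_supp hFγ
  exact hγ_lim (not_not.1 (mt hγ_supp hFγ))

end TrigonometricPolynomials

namespace MeasureTheory.Lp

noncomputable def vanishingOn {α : Type*} [MeasurableSpace α] (E : Type*) [NormedAddCommGroup E]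
    (p : ℝ≥0∞) [Fact (1 ≤ p)] (𝕜 : Type*) [NormedRing 𝕜] [Module 𝕜 E] [IsBoundedSMul 𝕜 E]
    (ν : Measure α) (s : Set α) : Submodule 𝕜 (Lp E p ν) :=
  LinearMap.ker (LpToLpRestrictCLM α E 𝕜 ν p s : Lp E p ν →ₗ[𝕜] Lp E p (ν.restrict s))

variable {α E 𝕜 : Type*} [MeasurableSpace α] [NormedAddCommGroup E] {p : ℝ≥0∞} [Fact (1 ≤ p)]
  [NormedRing 𝕜] [Module 𝕜 E] [IsBoundedSMul 𝕜 E] {ν : Measure α}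

lemma mem_vanishingOn {s : Set α} {f : Lp E p ν} :
    f ∈ vanishingOn E p 𝕜 ν s ↔ ∀ᵐ γ ∂ν, γ ∈ s → f γ = 0 := by
  rw [vanishingOn, LinearMap.mem_ker, ContinuousLinearMap.coe_coe, Lp.eq_zero_iff_ae_eq_zero,
    ← ae_restrict_iff ((Lp.stronglyMeasurable f).measurableSet_eq_fun stronglyMeasurable_const)]
  exact (LpToLpRestrictCLM_coeFn 𝕜 s f).congr_left

lemma isClosed_vanishingOn (s : Set α) : IsClosed (vanishingOn E p 𝕜 ν s : Set (Lp E p ν)) :=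
  ContinuousLinearMap.isClosed_ker _

end MeasureTheory.Lp

lemma Submodule.eq_of_le_of_orthogonal_inf_eq_bot {𝕜 E : Type*} [RCLike 𝕜]
    [NormedAddCommGroup E] [InnerProductSpace 𝕜 E] {K W : Submodule 𝕜 E}
    [K.HasOrthogonalProjection] (hKW : K ≤ W) (h : Kᗮ ⊓ W = ⊥) : K = W := by
  rw [← Submodule.sup_orthogonal_inf_of_hasOrthogonalProjection hKW, h, sup_bot_eq]

lemma Set.Countable.ae_of_forall_ae_or {ι α : Type*} [MeasurableSpace α] {ν : Measure α}
    {A : Set ι} (hA : A.Countable) {P : ι → α → Prop} {Q : α → Prop}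
    (hQ : ∀ᵐ γ ∂ν, (∀ i ∈ A, P i γ) → Q γ) (hPQ : ∀ i ∈ A, ∀ᵐ γ ∂ν, P i γ ∨ Q γ) :
    ∀ᵐ γ ∂ν, Q γ := by
  filter_upwards [hQ, (ae_ball_iff hA).2 hPQ] with γ hγQ hγPQ
  by_contra hnot
  exact hnot (hγQ fun i hi => (hγPQ i hi).resolve_right hnot)

lemma inner_eq_integral_conj_mul_mul {E Γ : Type*} [NormedAddCommGroup E]
    [InnerProductSpace ℂ E] [MeasurableSpace Γ] {ν : Measure Γ} (𝓕 : E →ₗᵢ[ℂ] Lp ℂ 2 ν)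
    {χ : Γ → ℂ} {ψ φ : E} (hψ : ∀ᵐ γ ∂ν, 𝓕 ψ γ = conj (χ γ) * 𝓕 φ γ) (z : E) :
    ⟪ψ, z⟫_ℂ = ∫ γ, conj (𝓕 φ γ) * 𝓕 z γ * χ γ ∂ν := by
  rw [← 𝓕.inner_map_map, L2.inner_def]
  refine integral_congr_ae ?_
  filter_upwards [hψ] with γ hγ
  rw [RCLike.inner_apply', hγ, map_mul, Complex.conj_conj]
  ring

lemma conj_mul_ae_eq_zero_of_forall_inner_eq_zero {G Γ E : Type*} [AddGroup G]
    [MeasurableSpace Γ] {ν : Measure Γ} [NormedAddCommGroup E] [InnerProductSpace ℂ E]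
    {e : G → Γ → ℂ} {H : Set G} {Ω : Set Γ}
    (he_meas : ∀ x, Measurable (e x)) (he_norm : ∀ x γ, ‖e x γ‖ = 1)
    (he_hom : ∀ x y γ, e (x + y) γ = e x γ * e y γ)
    (hdet : ∀ F : Γ → ℂ, Integrable F ν → (∀ x, ∫ γ, F γ * e x γ ∂ν = 0) → F =ᵐ[ν] 0)
    (happrox : ∀ x, IsBoundedTrigLimitOn e H ν Ω (e (-x)))
    (𝓕 : E →ₗᵢ[ℂ] Lp ℂ 2 ν) {ψ : G → E} {φ z : E}
    (hψ : ∀ h ∈ H, ∀ᵐ γ ∂ν, 𝓕 (ψ h) γ = e (-h) γ * 𝓕 φ γ)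
    (hφ : ∀ᵐ γ ∂ν, γ ∉ Ω → 𝓕 φ γ = 0) (hz : ∀ h ∈ H, ⟪ψ h, z⟫_ℂ = 0) :
    (fun γ => conj (𝓕 φ γ) * 𝓕 z γ) =ᵐ[ν] 0 := by
  have hF : Integrable (fun γ => conj (𝓕 φ γ) * 𝓕 z γ) ν :=
    (L2.integrable_inner (𝓕 φ) (𝓕 z)).congr (ae_of_all _ fun γ => RCLike.inner_apply' _ _)
  refine ae_eq_zero_of_integral_mul_eq_zero he_meas (fun x γ => (he_norm x γ).le) hdet happrox
    hF ?_ fun h hh => ?_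
  · filter_upwards [hφ] with γ hγ hγΩ
    rw [hγ hγΩ, map_zero, zero_mul]
  · rw [← inner_eq_integral_conj_mul_mul 𝓕 ?_ z, hz h hh]
    filter_upwards [hψ h hh] with γ hγ
    rw [hγ, conj_eq_apply_neg_of_norm_eq_one (he_norm · γ) (he_hom · · γ)]

theorem SI_space_with_generators_supported_in_section_is_translation_invariant_general
    {G : Type*} [AddCommGroup G]
    [MeasurableSpace G]
    (μ : Measure G)
    {Gh : Type*} [MeasurableSpace Gh] (ν : Measure Gh)
    (T : G → (Lp ℂ 2 μ ≃ₗᵢ[ℂ] Lp ℂ 2 μ))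
    (e : G → Gh → ℂ) (he_meas : ∀ x, Measurable (e x))
    (he_norm : ∀ x γ, ‖e x γ‖ = 1)
    (he_hom : ∀ x y γ, e (x + y) γ = e x γ * e y γ)
    (hdet : ∀ F : Gh → ℂ, Integrable F ν →
      (∀ x : G, ∫ γ, F γ * e x γ ∂ν = 0) → F =ᵐ[ν] 0)
    (𝓕 : Lp ℂ 2 μ ≃ₗᵢ[ℂ] Lp ℂ 2 ν)
    (h𝓕 : ∀ (x : G) (f : Lp ℂ 2 μ),
      ∀ᵐ γ ∂ν, (𝓕 (T x f)) γ = e (-x) γ * (𝓕 f) γ)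
    (Hl : AddSubgroup G)
    (Om : Set Gh)
    (happrox : ∀ x : G, ∃ (p : ℕ → Gh → ℂ) (C : ℝ),
      (∀ n, ∃ (s : Finset G) (c : G → ℂ), (∀ h ∈ s, h ∈ Hl) ∧
        ∀ γ, p n γ = ∑ h ∈ s, c h * e h γ) ∧
      (∀ n γ, ‖p n γ‖ ≤ C) ∧
      (∀ᵐ γ ∂ν, γ ∈ Om →
        Filter.Tendsto (fun n => p n γ) Filter.atTop (nhds (e (-x) γ))))
    (A : Set (Lp ℂ 2 μ)) (hA : A.Countable)
    (hsupp : ∀ φ ∈ A, ∀ᵐ γ ∂ν, γ ∉ Om → (𝓕 φ) γ = 0)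
    (V : Submodule ℂ (Lp ℂ 2 μ))
    (hVgen : V = (Submodule.span ℂ
      {g : Lp ℂ 2 μ | ∃ h ∈ Hl, ∃ φ ∈ A, g = T h φ}).topologicalClosure) :
    (∀ (x : G), ∀ f ∈ V, T x f ∈ V) ∧
    ∀ f : Lp ℂ 2 μ, f ∈ V ↔
      ∀ᵐ γ ∂ν, (∀ φ ∈ A, (𝓕 φ) γ = 0) → (𝓕 f) γ = 0 := by
  set W := (Lp.vanishingOn ℂ 2 ℂ ν {γ | ∀ φ ∈ A, 𝓕 φ γ = 0}).comap
    (𝓕 : Lp ℂ 2 μ →ₗ[ℂ] Lp ℂ 2 ν)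
  have hW (f : Lp ℂ 2 μ) : f ∈ W ↔ ∀ᵐ γ ∂ν, (∀ φ ∈ A, 𝓕 φ γ = 0) → 𝓕 f γ = 0 :=
    Lp.mem_vanishingOn
  have hW_translate (x : G) (f : Lp ℂ 2 μ) (hf : f ∈ W) : T x f ∈ W := by
    rw [hW] at hf ⊢
    filter_upwards [hf, h𝓕 x f] with γ hγ hγT hγA
    rw [hγT, hγ hγA, mul_zero]
  have hgen_mem (h : G) (hh : h ∈ Hl) (φ : Lp ℂ 2 μ) (hφ : φ ∈ A) : T h φ ∈ V :=
    hVgen ▸ Submodule.le_topologicalClosure _ (Submodule.subset_span ⟨h, hh, φ, hφ, rfl⟩)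
  have hVW : V ≤ W := by
    rw [hVgen]
    refine Submodule.topologicalClosure_minimal _ (Submodule.span_le.2 ?_)
      ((Lp.isClosed_vanishingOn _).preimage 𝓕.continuous)
    rintro _ ⟨h, -, φ, hφ, rfl⟩
    exact hW_translate h φ ((hW φ).2 (ae_of_all _ fun γ hγA => hγA φ hφ))
  have hVW_orth : Vᗮ ⊓ W = ⊥ := by
    refine (Submodule.eq_bot_iff _).2 fun z ⟨hzV, hzW⟩ => ?_
    have hAz (φ) (hφ : φ ∈ A) : ∀ᵐ γ ∂ν, 𝓕 φ γ = 0 ∨ 𝓕 z γ = 0 := by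
      filter_upwards [conj_mul_ae_eq_zero_of_forall_inner_eq_zero he_meas he_norm he_hom hdet
        happrox 𝓕.toLinearIsometry (fun h _ => h𝓕 h φ) (hsupp φ hφ)
        fun h hh => Submodule.inner_right_of_mem_orthogonal (hgen_mem h hh φ hφ) hzV] with γ hγ
      simpa using hγ
    have hz : 𝓕 z =ᵐ[ν] 0 := hA.ae_of_forall_ae_or ((hW z).1 hzW) hAz
    exact 𝓕.map_eq_zero_iff.1 (Lp.eq_zero_iff_ae_eq_zero.2 hz)
  have : CompleteSpace V := by
    rw [hVgen]; exact (Submodule.isClosed_topologicalClosure _).completeSpace_coe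
  obtain rfl : V = W := Submodule.eq_of_le_of_orthogonal_inf_eq_bot hVW hVW_orth
  exact ⟨hW_translate, hW⟩

/-- If every generator `φ ∈ A` has Fourier transform supported in a measurable section
`Ω` of `Ĝ/H*` (for a uniform lattice `H` of a second countable LCA group `G`), then the
`H`-invariant space `V` generated by `A` is invariant under all translations; in
particular `V = {f : 𝓕 f = 0 a.e. on E}` with `E = ⋂_{φ ∈ A}{𝓕 φ = 0}`.  The key fact
that characters are a.e. limits on `Ω` of uniformly bounded trigonometric polynomials in
the characters of `H` is taken as a hypothesis. -/
theorem SI_space_with_generators_supported_in_section_is_translation_invariant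
    {G : Type*} [AddCommGroup G] [TopologicalSpace G] [IsTopologicalAddGroup G]
    [LocallyCompactSpace G] [SecondCountableTopology G]
    [MeasurableSpace G] [BorelSpace G]
    (μ : Measure G) [μ.IsAddHaarMeasure]
    {Gh : Type*} [MeasurableSpace Gh] (ν : Measure Gh) [SigmaFinite ν]
    (T : G → (Lp ℂ 2 μ ≃ₗᵢ[ℂ] Lp ℂ 2 μ))
    (hT : ∀ (x : G) (f : Lp ℂ 2 μ), ∀ᵐ y ∂μ, (T x f) y = f (y - x))
    (e : G → Gh → ℂ) (he_meas : ∀ x, Measurable (e x))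
    (he_norm : ∀ x γ, ‖e x γ‖ = 1)
    (he_hom : ∀ x y γ, e (x + y) γ = e x γ * e y γ)
    (hdet : ∀ F : Gh → ℂ, Integrable F ν →
      (∀ x : G, ∫ γ, F γ * e x γ ∂ν = 0) → F =ᵐ[ν] 0)
    (𝓕 : Lp ℂ 2 μ ≃ₗᵢ[ℂ] Lp ℂ 2 ν)
    (h𝓕 : ∀ (x : G) (f : Lp ℂ 2 μ),
      ∀ᵐ γ ∂ν, (𝓕 (T x f)) γ = e (-x) γ * (𝓕 f) γ)
    (Hl : AddSubgroup G) (hHl_count : (Hl : Set G).Countable)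
    (hHl_disc : DiscreteTopology Hl) (hHl_cocompact : CompactSpace (G ⧸ Hl))
    (Om : Set Gh) (hOm_meas : MeasurableSet Om) (hOm_fin : ν Om < ∞)
    (happrox : ∀ x : G, ∃ (p : ℕ → Gh → ℂ) (C : ℝ),
      (∀ n, ∃ (s : Finset G) (c : G → ℂ), (∀ h ∈ s, h ∈ Hl) ∧
        ∀ γ, p n γ = ∑ h ∈ s, c h * e h γ) ∧
      (∀ n γ, ‖p n γ‖ ≤ C) ∧
      (∀ᵐ γ ∂ν, γ ∈ Om →
        Filter.Tendsto (fun n => p n γ) Filter.atTop (nhds (e (-x) γ))))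
    (A : Set (Lp ℂ 2 μ)) (hA : A.Countable)
    (hsupp : ∀ φ ∈ A, ∀ᵐ γ ∂ν, γ ∉ Om → (𝓕 φ) γ = 0)
    (V : Submodule ℂ (Lp ℂ 2 μ))
    (hVgen : V = (Submodule.span ℂ
      {g : Lp ℂ 2 μ | ∃ h ∈ Hl, ∃ φ ∈ A, g = T h φ}).topologicalClosure) :
    (∀ (x : G), ∀ f ∈ V, T x f ∈ V) ∧
    ∀ f : Lp ℂ 2 μ, f ∈ V ↔
      ∀ᵐ γ ∂ν, (∀ φ ∈ A, (𝓕 φ) γ = 0) → (𝓕 f) γ = 0 :=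
  SI_space_with_generators_supported_in_section_is_translation_invariant_general μ ν T e he_meas
    he_norm he_hom hdet 𝓕 h𝓕 Hl Om happrox A hA hsupp V hVgen
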